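/- arXiv:1411.6552 — 6 statements merged into one kernel-verified Lean document; each statement's English description precedes it below -/
import Mathlib

section
/- Let s, t be positive integers, p, q ∈ ℂ, and let f(z) = z^{s+t} + p z^t + q. For v ∈ ℝ with v > 0, let k denote the number of roots of f in ℂ of norm strictly smaller than v, counted with multiplicity. Then: (i) if |q| > v^{s+t} + |p|·v^t then k = 0; (ii) if v^{s+t} > |q| + |p|·v^t then k = s + t; (iii) if |p|·v^t > |q| + v^{s+t} then k = t. -/
/-!
At a root `z` of `z ^ (s + t) + p * z ^ t + c` the three terms sum to zero, so the norm of each is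
at most the sum of the norms of the other two. In case (i) this excludes roots with `‖z‖ < v`; in
case (ii) it excludes roots with `‖z‖ ≥ v`, because `r ↦ r ^ t * (r ^ s - ‖p‖)` is increasing for
`r ≥ v`. In case (iii) it excludes roots on the circle `‖z‖ = v` for every constant term `c` with
`‖c‖ ≤ ‖q‖`. Roots of monic polynomials move continuously with the coefficients, so the number of
roots inside the circle is constant on that connected disk of constant terms, and at `c = 0` the
polynomial `z ^ t * (z ^ s + p)` has exactly `t` of them.
-/

open Polynomial Filter Topology

lemma Multiset.exists_eq_map_univ_val {α : Type*} {M : Multiset α} {n : ℕ}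
    (h : Multiset.card M = n) : ∃ Z : Fin n → α, M = Finset.univ.val.map Z := by
  obtain ⟨l, rfl⟩ : ∃ l : List α, ↑l = M := ⟨M.toList, Multiset.coe_toList M⟩
  rw [Multiset.coe_card] at h
  subst h
  exact ⟨l.get, by rw [Fin.univ_val_map, List.ofFn_get]⟩

lemma Filter.Tendsto.eventually_mem_iff {α ι : Type*} [TopologicalSpace α] {l : Filter ι}
    {x : ι → α} {w : α} {U : Set α} (hx : Tendsto x l (𝓝 w)) (hw : w ∉ frontier U) :
    ∀ᶠ k in l, (x k ∈ U ↔ w ∈ U) := by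
  by_cases hwU : w ∈ U
  · have hw' : w ∈ interior U := by_contra fun h => hw ⟨subset_closure hwU, h⟩
    filter_upwards [hx (isOpen_interior.mem_nhds hw')] with k hk
    exact iff_of_true (interior_subset hk) hwU
  · have hw' : w ∉ closure U := fun h => hw ⟨h, fun h' => hwU (interior_subset h')⟩
    filter_upwards [hx (isClosed_closure.isOpen_compl.mem_nhds hw')] with k hk
    exact iff_of_false (fun h => hk (subset_closure h)) hwU

namespace Polynomial

lemma eval_eq_prod_sub_of_roots_eq_map {k : Type*} [Field k] [IsAlgClosed k] {P : k[X]}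
    (hP : P.Monic) {d : ℕ} {Z : Fin d → k} (hZ : P.roots = Finset.univ.val.map Z) (z : k) :
    P.eval z = ∏ i, (z - Z i) := by
  rw [← prod_multiset_X_sub_C_of_monic_of_roots_card_eq hP IsAlgClosed.card_roots_eq_natDegree,
    eval_multiset_prod, hZ, Multiset.map_map, Multiset.map_map, Finset.prod_eq_multiset_prod]
  simp

lemma roots_eq_map_of_eval_eq_prod {k : Type*} [Field k] [Infinite k] {Q : k[X]} {d : ℕ}
    {W : Fin d → k} (hQ : ∀ z, Q.eval z = ∏ i, (z - W i)) : Q.roots = Finset.univ.val.map W := by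
  have : Q = ((Finset.univ.val.map W).map fun a => X - C a).prod :=
    Polynomial.funext fun z => by
      rw [hQ, eval_multiset_prod, Multiset.map_map, Multiset.map_map, Finset.prod_eq_multiset_prod]
      simp
  rw [this, roots_multiset_prod_X_sub_C]

lemma exists_subseq_tendsto_roots {P : ℕ → ℂ[X]} {Q : ℂ[X]} {d : ℕ} {R : ℝ}
    {Z : ℕ → Fin d → ℂ} (hP : ∀ n, (P n).Monic) (hZ : ∀ n, (P n).roots = Finset.univ.val.map (Z n))
    (hZR : ∀ n i, ‖Z n i‖ ≤ R) (heval : ∀ z, Tendsto (fun n => (P n).eval z) atTop (𝓝 (Q.eval z))) :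
    ∃ φ : ℕ → ℕ, StrictMono φ ∧ ∃ W : Fin d → ℂ,
      Q.roots = Finset.univ.val.map W ∧ Tendsto (Z ∘ φ) atTop (𝓝 W) := by
  obtain ⟨W, -, φ, hφ, hW⟩ :=
    (isCompact_univ_pi fun _ : Fin d => isCompact_closedBall (0 : ℂ) R).tendsto_subseq
      (x := Z) fun n i _ => mem_closedBall_zero_iff.mpr (hZR n i)
  refine ⟨φ, hφ, W, roots_eq_map_of_eval_eq_prod fun z => ?_, hW⟩
  refine tendsto_nhds_unique ((heval z).comp hφ.tendsto_atTop) ?_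
  simp_rw [Function.comp_def, eval_eq_prod_sub_of_roots_eq_map (hP _) (hZ _)]
  exact tendsto_finsetProd _ fun i _ =>
    tendsto_const_nhds.sub (((continuous_apply i).tendsto W).comp hW)

lemma exists_subseq_card_roots_filter_eq {P : ℕ → ℂ[X]} {Q : ℂ[X]} {d : ℕ} {R : ℝ}
    {U : Set ℂ} [DecidablePred (· ∈ U)] (hP : ∀ n, (P n).Monic) (hdeg : ∀ n, (P n).natDegree = d)
    (hbound : ∀ n, ∀ z ∈ (P n).roots, ‖z‖ ≤ R)
    (heval : ∀ z, Tendsto (fun n => (P n).eval z) atTop (𝓝 (Q.eval z)))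
    (hfront : ∀ z ∈ Q.roots, z ∉ frontier U) :
    ∃ φ : ℕ → ℕ, StrictMono φ ∧ ∀ᶠ k in atTop,
      ((P (φ k)).roots.filter (· ∈ U)).card = (Q.roots.filter (· ∈ U)).card := by
  choose Z hZ using fun n =>
    Multiset.exists_eq_map_univ_val (IsAlgClosed.card_roots_eq_natDegree.trans (hdeg n))
  have hZR : ∀ n i, ‖Z n i‖ ≤ R := fun n i =>
    hbound n _ (by rw [hZ n]; exact Multiset.mem_map_of_mem _ (Finset.mem_univ_val i))
  obtain ⟨φ, hφ, W, hW, hlim⟩ := exists_subseq_tendsto_roots hP hZ hZR heval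
  have hmem : ∀ i, ∀ᶠ k in atTop, (Z (φ k) i ∈ U ↔ W i ∈ U) := fun i =>
    (((continuous_apply i).tendsto W).comp hlim).eventually_mem_iff
      (hfront _ (by rw [hW]; exact Multiset.mem_map_of_mem _ (Finset.mem_univ_val i)))
  refine ⟨φ, hφ, ?_⟩
  filter_upwards [eventually_all.mpr hmem] with k hk
  rw [hZ, hW, Multiset.filter_map, Multiset.filter_map, Multiset.card_map, Multiset.card_map]
  exact congrArg _ (Multiset.filter_congr fun i _ => hk i)

lemma continuous_card_roots_filter {X : Type*} [TopologicalSpace X] [FirstCountableTopology X]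
    {F : X → ℂ[X]} {d : ℕ} {R : ℝ} {U : Set ℂ} [DecidablePred (· ∈ U)]
    (hF : ∀ x, (F x).Monic) (hdeg : ∀ x, (F x).natDegree = d)
    (hbound : ∀ x, ∀ z ∈ (F x).roots, ‖z‖ ≤ R) (heval : ∀ z, Continuous fun x => (F x).eval z)
    (hfront : ∀ x, ∀ z ∈ (F x).roots, z ∉ frontier U) :
    Continuous fun x => ((F x).roots.filter (· ∈ U)).card := by
  refine continuous_iff_continuousAt.mpr fun x => ?_
  rw [ContinuousAt, nhds_discrete ℕ]
  refine tendsto_of_subseq_tendsto fun u hu => ?_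
  obtain ⟨φ, -, hφ⟩ := exists_subseq_card_roots_filter_eq (P := F ∘ u) (fun _ => hF _)
    (fun _ => hdeg _) (fun _ => hbound _) (fun z => ((heval z).tendsto x).comp hu) (hfront x)
  exact ⟨φ, tendsto_pure.mpr hφ⟩

end Polynomial

lemma norm_le_add_of_add_add_eq_zero {E : Type*} [SeminormedAddCommGroup E] {a b c : E}
    (h : a + b + c = 0) : ‖a‖ ≤ ‖b‖ + ‖c‖ := by
  rw [eq_neg_of_add_eq_zero_left ((add_assoc a b c).symm.trans h), norm_neg]
  exact norm_add_le b c

noncomputable def monicTrinomial (s t : ℕ) (p c : ℂ) : ℂ[X] :=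
  X ^ (s + t) + C p * X ^ t + C c

section MonicTrinomial

variable {s t : ℕ} {p q c z : ℂ} {v : ℝ}

@[simp]
lemma eval_monicTrinomial : (monicTrinomial s t p c).eval z = z ^ (s + t) + p * z ^ t + c := by
  simp [monicTrinomial]

lemma monicTrinomial_monic (hs : 0 < s) : (monicTrinomial s t p c).Monic := by
  unfold monicTrinomial
  monicity!
  simp [hs.ne']

lemma natDegree_monicTrinomial (hs : 0 < s) : (monicTrinomial s t p c).natDegree = s + t := by
  unfold monicTrinomial
  compute_degree!
  simp [hs.ne']

lemma mem_roots_monicTrinomial (hs : 0 < s) :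
    z ∈ (monicTrinomial s t p c).roots ↔ z ^ (s + t) + p * z ^ t + c = 0 := by
  rw [Polynomial.mem_roots (monicTrinomial_monic hs).ne_zero, IsRoot, eval_monicTrinomial]

lemma monicTrinomial_zero : monicTrinomial s t p 0 = X ^ t * (X ^ s + C p) := by
  simp only [monicTrinomial, map_zero, add_zero]
  ring

lemma norm_le_max_of_trinomial_eq_zero (hs : 0 < s) (hz : z ^ (s + t) + p * z ^ t + c = 0) :
    ‖z‖ ≤ max 1 (‖p‖ + ‖c‖) := by
  rcases le_or_gt ‖z‖ 1 with h1 | h1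
  · exact le_max_of_le_left h1
  refine le_max_of_le_right ?_
  have hroot := norm_le_add_of_add_add_eq_zero hz
  simp only [norm_pow, norm_mul] at hroot
  have ht : 1 ≤ ‖z‖ ^ t := one_le_pow₀ h1.le
  calc ‖z‖ = ‖z‖ ^ 1 := (pow_one _).symm
    _ ≤ ‖z‖ ^ s := pow_le_pow_right₀ h1.le hs
    _ ≤ ‖p‖ + ‖c‖ := by
      rw [pow_add] at hroot
      nlinarith [norm_nonneg c]

lemma le_norm_of_trinomial_eq_zero (h : ‖c‖ > v ^ (s + t) + ‖p‖ * v ^ t)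
    (hz : z ^ (s + t) + p * z ^ t + c = 0) : v ≤ ‖z‖ := by
  by_contra! hzv
  have hc := norm_le_add_of_add_add_eq_zero (a := c) (b := z ^ (s + t)) (c := p * z ^ t)
    (by linear_combination hz)
  simp only [norm_pow, norm_mul] at hc
  have := pow_le_pow_left₀ (norm_nonneg z) hzv.le
  nlinarith [this (s + t), this t, norm_nonneg p]

lemma norm_lt_of_trinomial_eq_zero (hv : 0 < v) (h : v ^ (s + t) > ‖c‖ + ‖p‖ * v ^ t)
    (hz : z ^ (s + t) + p * z ^ t + c = 0) : ‖z‖ < v := by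
  by_contra! hzv
  have hlead := norm_le_add_of_add_add_eq_zero hz
  simp only [norm_pow, norm_mul] at hlead
  have hp : ‖p‖ < v ^ s := by
    refine lt_of_mul_lt_mul_right (a := v ^ t) ?_ (by positivity)
    rw [← pow_add]
    linarith [norm_nonneg c]
  have hmono : v ^ t * (v ^ s - ‖p‖) ≤ ‖z‖ ^ t * (‖z‖ ^ s - ‖p‖) :=
    mul_le_mul (pow_le_pow_left₀ hv.le hzv t)
      (by linarith [pow_le_pow_left₀ hv.le hzv s]) (by linarith) (by positivity)
  rw [pow_add] at h hlead
  nlinarith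

lemma norm_ne_of_trinomial_eq_zero (h : ‖p‖ * v ^ t > ‖c‖ + v ^ (s + t))
    (hz : z ^ (s + t) + p * z ^ t + c = 0) : ‖z‖ ≠ v := by
  intro hzv
  have hmid := norm_le_add_of_add_add_eq_zero (a := p * z ^ t) (b := z ^ (s + t)) (c := c)
    (by linear_combination hz)
  simp only [norm_pow, norm_mul, hzv] at hmid
  linarith

lemma roots_filter_norm_lt_monicTrinomial_zero (hs : 0 < s) (hv : 0 < v) (hp : v ^ s < ‖p‖) :
    (monicTrinomial s t p 0).roots.filter (fun z => ‖z‖ < v) = t • {0} := by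
  have hne : (X ^ s + C p : ℂ[X]) ≠ 0 := (monic_X_pow_add_C p hs.ne').ne_zero
  rw [monicTrinomial_zero, roots_mul (mul_ne_zero (pow_ne_zero t X_ne_zero) hne), roots_X_pow,
    Multiset.filter_add, Multiset.filter_eq_self.mpr, Multiset.filter_eq_nil.mpr, add_zero]
  · intro z hz hzv
    have hzp : z ^ s = -p :=
      eq_neg_of_add_eq_zero_left (by simpa using (Polynomial.mem_roots hne).mp hz)
    have : ‖p‖ ≤ v ^ s := by
      rw [← norm_neg, ← hzp, norm_pow]
      exact pow_le_pow_left₀ (norm_nonneg z) hzv.le s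
    linarith
  · intro z hz
    rw [Multiset.nsmul_singleton, Multiset.mem_replicate] at hz
    simpa [hz.2] using hv

lemma roots_filter_norm_lt_monicTrinomial_eq_zero (hs : 0 < s)
    (h : ‖q‖ > v ^ (s + t) + ‖p‖ * v ^ t) :
    (monicTrinomial s t p q).roots.filter (fun z => ‖z‖ < v) = 0 :=
  Multiset.filter_eq_nil.mpr fun _ hz =>
    not_lt.mpr (le_norm_of_trinomial_eq_zero h ((mem_roots_monicTrinomial hs).mp hz))

lemma roots_filter_norm_lt_monicTrinomial_eq_roots (hs : 0 < s) (hv : 0 < v)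
    (h : v ^ (s + t) > ‖q‖ + ‖p‖ * v ^ t) :
    (monicTrinomial s t p q).roots.filter (fun z => ‖z‖ < v) = (monicTrinomial s t p q).roots :=
  Multiset.filter_eq_self.mpr fun _ hz =>
    norm_lt_of_trinomial_eq_zero hv h ((mem_roots_monicTrinomial hs).mp hz)

lemma card_roots_filter_norm_lt_monicTrinomial (hs : 0 < s) (hv : 0 < v)
    (h : ‖p‖ * v ^ t > ‖q‖ + v ^ (s + t)) :
    Multiset.card ((monicTrinomial s t p q).roots.filter (fun z => ‖z‖ < v)) = t := by
  let D := Metric.closedBall (0 : ℂ) ‖q‖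
  have hD : ∀ c : D, ‖(c : ℂ)‖ ≤ ‖q‖ := fun c => mem_closedBall_zero_iff.mp c.2
  have hcont : Continuous fun c : D =>
      Multiset.card ((monicTrinomial s t p c).roots.filter (· ∈ {z : ℂ | ‖z‖ < v})) :=
    continuous_card_roots_filter (F := fun c : D => monicTrinomial s t p c)
      (R := max 1 (‖p‖ + ‖q‖)) (fun _ => monicTrinomial_monic hs)
      (fun _ => natDegree_monicTrinomial hs)
      (fun c _ hz =>
        (norm_le_max_of_trinomial_eq_zero hs ((mem_roots_monicTrinomial hs).mp hz)).trans
          (max_le_max le_rfl (add_le_add_right (hD c) _)))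
      (fun z => by simp only [eval_monicTrinomial]; fun_prop)
      (fun c _ hz => by
        rw [← ball_zero_eq, frontier_ball 0 hv.ne', mem_sphere_zero_iff_norm]
        exact norm_ne_of_trinomial_eq_zero (h.trans_le' (by linarith [hD c]))
          ((mem_roots_monicTrinomial hs).mp hz))
  have hconst := PreconnectedSpace.constant
    (Subtype.preconnectedSpace (convex_closedBall (0 : ℂ) ‖q‖).isPreconnected) hcont
    (x := ⟨q, mem_closedBall_zero_iff.mpr le_rfl⟩) (y := ⟨0, by simp⟩)
  have hp : v ^ s < ‖p‖ := by
    refine lt_of_mul_lt_mul_right (a := v ^ t) ?_ (by positivity)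
    rw [← pow_add]
    linarith [norm_nonneg q]
  simp only [Set.mem_ofPred_eq] at hconst
  rw [hconst, roots_filter_norm_lt_monicTrinomial_zero hs hv hp, Multiset.card_nsmul,
    Multiset.card_singleton, mul_one]

end MonicTrinomial

theorem bohl_first_theorem_general (s t : ℕ) (hs : 0 < s) (p q : ℂ)
    (v : ℝ) (hv : 0 < v) (k : ℕ)
    (hk : k = Multiset.card
      (((X ^ (s + t) + C p * X ^ t + C q : Polynomial ℂ)).roots.filter
        (fun z => ‖z‖ < v))) :
    (‖q‖ > v ^ (s + t) + ‖p‖ * v ^ t → k = 0) ∧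
    (v ^ (s + t) > ‖q‖ + ‖p‖ * v ^ t → k = s + t) ∧
    (‖p‖ * v ^ t > ‖q‖ + v ^ (s + t) → k = t) := by
  change k = Multiset.card ((monicTrinomial s t p q).roots.filter fun z => ‖z‖ < v) at hk
  subst hk
  refine ⟨fun h => ?_, fun h => ?_, card_roots_filter_norm_lt_monicTrinomial hs hv⟩
  · rw [roots_filter_norm_lt_monicTrinomial_eq_zero hs h, Multiset.card_zero]
  · rw [roots_filter_norm_lt_monicTrinomial_eq_roots hs hv h,
      IsAlgClosed.card_roots_eq_natDegree, natDegree_monicTrinomial hs]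

/-- Bohl's first theorem (Pellet-type bounds for trinomials): for
`f = z^(s+t) + p z^t + q` and `v > 0`, if `k` is the number of roots of `f` of
norm strictly smaller than `v` (with multiplicity), then the three lopsidedness
conditions force `k = 0`, `k = s + t`, `k = t` respectively. -/
theorem bohl_first_theorem (s t : ℕ) (hs : 0 < s) (ht : 0 < t) (p q : ℂ)
    (v : ℝ) (hv : 0 < v) (k : ℕ)
    (hk : k = Multiset.card
      (((X ^ (s + t) + C p * X ^ t + C q : Polynomial ℂ)).roots.filter
        (fun z => ‖z‖ < v))) :
    (‖q‖ > v ^ (s + t) + ‖p‖ * v ^ t → k = 0) ∧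
    (v ^ (s + t) > ‖q‖ + ‖p‖ * v ^ t → k = s + t) ∧
    (‖p‖ * v ^ t > ‖q‖ + v ^ (s + t) → k = t) :=
  bohl_first_theorem_general s t hs p q v hv k hk
end

section
/- Let s, t be positive integers, p ∈ ℂ, q ∈ ℂ with q ≠ 0, and f(z) = z^{s+t} + p z^t + q. For v > 0, f has a root of norm v if and only if there exists φ ∈ [0, 2π) with p = −v^s·e^{i·s·φ} − |q|·v^{−t}·e^{i·(arg(q) − t·φ)}. (Equivalently: p lies, up to rotation, on the hypotrochoid with parameters R = v^s·(s+t)/t, r = v^s·s/t, d = |q|·v^{−t}.) -/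
/-!
Dividing `z ^ (s + t) + p z ^ t + q = 0` by `z ^ t` gives `p = -z ^ s - q z ^ (-t)`; writing the
root in polar form `z = v e^{iφ}` and `q = |q| e^{i arg q}` turns the right-hand side into the
hypotrochoid point of parameter `φ`, and `φ` can be taken in `[0, 2π)` by periodicity.
-/

open Polynomial Complex

theorem pow_add_add_mul_pow_add_eq_zero_iff {K : Type*} [Field K] {z : K} (hz : z ≠ 0)
    (s t : ℕ) (p q : K) :
    z ^ (s + t) + p * z ^ t + q = 0 ↔ p = -z ^ s - q * z ^ (-(t : ℤ)) := by
  rw [zpow_neg, zpow_natCast, pow_add, ← sub_eq_zero (a := p)]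
  constructor <;> intro h
  · field_simp
    linear_combination h
  · field_simp at h
    linear_combination h

namespace Complex

theorem exists_mem_Ico_eq_norm_mul_exp_I_mul (z : ℂ) :
    ∃ φ ∈ Set.Ico 0 (2 * Real.pi), z = ‖z‖ * exp (I * φ) := by
  have hper : Function.Periodic (fun x : ℝ => exp (x * I)) (2 * Real.pi) := fun x => by
    simpa using exp_mul_I_periodic x
  obtain ⟨φ, hφ, h⟩ := hper.exists_mem_Ico₀ Real.two_pi_pos (arg z)
  refine ⟨φ, hφ, ?_⟩
  rw [mul_comm I, ← h]
  exact (norm_mul_exp_arg_mul_I z).symm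

theorem norm_ofReal_mul_exp_I_mul {v : ℝ} (hv : 0 ≤ v) (φ : ℝ) :
    ‖(v : ℂ) * exp (I * φ)‖ = v := by
  rw [norm_mul, mul_comm I, norm_exp_ofReal_mul_I, norm_real, Real.norm_of_nonneg hv, mul_one]

theorem ofReal_mul_exp_I_mul_pow (v φ : ℝ) (n : ℕ) :
    ((v : ℂ) * exp (I * φ)) ^ n = (v : ℂ) ^ n * exp (I * n * φ) := by
  rw [mul_pow, ← exp_nat_mul]
  ring_nf

theorem ofReal_mul_exp_I_mul_zpow (v φ : ℝ) (n : ℤ) :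
    ((v : ℂ) * exp (I * φ)) ^ n = (v : ℂ) ^ n * exp (I * n * φ) := by
  rw [mul_zpow, ← exp_int_mul]
  ring_nf

theorem mul_ofReal_mul_exp_I_mul_zpow_neg (q : ℂ) (v φ : ℝ) (t : ℕ) :
    q * ((v : ℂ) * exp (I * φ)) ^ (-(t : ℤ)) =
      ‖q‖ * (v : ℂ) ^ (-(t : ℤ)) * exp (I * (arg q - t * φ)) := by
  conv_lhs => rw [← norm_mul_exp_arg_mul_I q]
  rw [ofReal_mul_exp_I_mul_zpow, mul_sub, exp_sub, div_eq_mul_inv, ← exp_neg]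
  push_cast
  ring_nf

end Complex

theorem root_of_norm_iff_on_hypotrochoid_general (s t : ℕ)
    (p q : ℂ) (v : ℝ) (hv : 0 < v) :
    (∃ z : ℂ, (X ^ (s + t) + C p * X ^ t + C q : Polynomial ℂ).eval z = 0 ∧
        ‖z‖ = v) ↔
    ∃ φ ∈ Set.Ico (0 : ℝ) (2 * Real.pi),
      p = -((v : ℂ) ^ s * Complex.exp (Complex.I * s * φ))
        - (‖q‖ : ℂ) * (v : ℂ) ^ (-(t : ℤ)) *
            Complex.exp (Complex.I * ((q.arg : ℂ) - t * φ)) := by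
  have root_iff (φ : ℝ) :
      (X ^ (s + t) + C p * X ^ t + C q).eval ((v : ℂ) * exp (I * φ)) = 0 ↔
        p = -((v : ℂ) ^ s * exp (I * s * φ))
          - (‖q‖ : ℂ) * (v : ℂ) ^ (-(t : ℤ)) * exp (I * ((q.arg : ℂ) - t * φ)) := by
    have hz : (v : ℂ) * exp (I * φ) ≠ 0 := mul_ne_zero (ofReal_ne_zero.2 hv.ne') (exp_ne_zero _)
    simp only [eval_add, eval_mul, eval_pow, eval_X, eval_C]
    rw [pow_add_add_mul_pow_add_eq_zero_iff hz, ofReal_mul_exp_I_mul_pow,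
      mul_ofReal_mul_exp_I_mul_zpow_neg]
  constructor
  · rintro ⟨z, hz, hzv⟩
    obtain ⟨φ, hφ, hzφ⟩ := exists_mem_Ico_eq_norm_mul_exp_I_mul z
    rw [hzφ, hzv] at hz
    exact ⟨φ, hφ, (root_iff φ).1 hz⟩
  · rintro ⟨φ, -, hp⟩
    exact ⟨_, (root_iff φ).2 hp, norm_ofReal_mul_exp_I_mul hv.le φ⟩

/-- The trinomial `z^(s+t) + p z^t + q` has a root of norm `v > 0` if and only
if `p` lies on the hypotrochoid `φ ↦ -v^s e^(isφ) - |q| v^(-t) e^(i(arg q - tφ))`,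
i.e. (up to rotation) the hypotrochoid with parameters `R = v^s (s+t)/t`,
`r = v^s s/t`, `d = |q| v^(-t)`. -/
theorem root_of_norm_iff_on_hypotrochoid (s t : ℕ) (hs : 0 < s) (ht : 0 < t)
    (p q : ℂ) (hq : q ≠ 0) (v : ℝ) (hv : 0 < v) :
    (∃ z : ℂ, (X ^ (s + t) + C p * X ^ t + C q : Polynomial ℂ).eval z = 0 ∧
        ‖z‖ = v) ↔
    ∃ φ ∈ Set.Ico (0 : ℝ) (2 * Real.pi),
      p = -((v : ℂ) ^ s * Complex.exp (Complex.I * s * φ))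
        - (‖q‖ : ℂ) * (v : ℂ) ^ (-(t : ℤ)) *
            Complex.exp (Complex.I * ((q.arg : ℂ) - t * φ)) :=
  root_of_norm_iff_on_hypotrochoid_general s t p q v hv
end

section
/- Let s, t be positive integers, p ∈ ℂ, q ∈ ℂ with q ≠ 0, v > 0, and f(z) = z^{s+t} + p z^t + q. Define the hypotrochoid γ : [0,2π) → ℂ, γ(φ) = v^s·e^{i·s·φ} + |q|·v^{−t}·e^{i·(arg(q) − t·φ)}. Then f has two distinct roots a ≠ b with |a| = |b| = v if and only if there exist φ, ψ ∈ [0, 2π) with φ ≠ ψ and γ(φ) = γ(ψ) = −p (i.e., −p is a real double point of the hypotrochoid γ). -/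
open Polynomial Set Complex

/-!
Write a point of the circle `‖a‖ = v` as `a = v e^{iφ}` with `φ ∈ [0, 2π)`; this parametrisation
is a bijection. Since `γ(φ) · a^t = a^(s+t) + q` and `a ≠ 0`, we get `f(a) = 0 ↔ γ(φ) = -p`, so
pairs of distinct roots on the circle correspond exactly to pairs of distinct parameters at which
`γ` passes through `-p`.
-/

theorem Set.BijOn.exists_pair_ne_iff {α β : Type*} {g : α → β} {s : Set α} {t : Set β}
    (hg : BijOn g s t) (P : β → Prop) :
    (∃ a ∈ t, ∃ b ∈ t, a ≠ b ∧ P a ∧ P b) ↔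
      ∃ x ∈ s, ∃ y ∈ s, x ≠ y ∧ P (g x) ∧ P (g y) := by
  constructor
  · rintro ⟨a, ha, b, hb, hab, hPa, hPb⟩
    obtain ⟨x, hx, rfl⟩ := hg.surjOn ha
    obtain ⟨y, hy, rfl⟩ := hg.surjOn hb
    exact ⟨x, hx, y, hy, ne_of_apply_ne g hab, hPa, hPb⟩
  · rintro ⟨x, hx, y, hy, hxy, hPx, hPy⟩
    exact ⟨g x, hg.mapsTo hx, g y, hg.mapsTo hy, (hg.injOn.ne_iff hx hy).2 hxy, hPx, hPy⟩

theorem Complex.bijOn_ofReal_mul_exp_mul_I_Ico {v : ℝ} (hv : 0 < v) :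
    BijOn (fun φ : ℝ => (v : ℂ) * exp (φ * I)) (Ico 0 (2 * Real.pi)) (Metric.sphere 0 v) := by
  refine ⟨fun φ _ => ?_, fun φ hφ ψ hψ h => ?_, fun z hz => ?_⟩
  · simp [norm_exp_ofReal_mul_I, abs_of_pos hv]
  · refine Circle.exp_injOn_Ico (by simp) hφ hψ (Circle.ext ?_)
    simpa [Circle.coe_exp, hv.ne'] using h
  · obtain ⟨φ, hφ, hexp⟩ := Circle.periodic_exp.exists_mem_Ico₀ Real.two_pi_pos z.arg
    refine ⟨φ, hφ, ?_⟩
    rw [mem_sphere_zero_iff_norm] at hz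
    have hexp' : exp (z.arg * I) = exp (φ * I) := congrArg Subtype.val hexp
    simp only [← hz, ← hexp', norm_mul_exp_arg_mul_I]

noncomputable def hypotrochoid (s t : ℕ) (q : ℂ) (v φ : ℝ) : ℂ :=
  (v : ℂ) ^ s * exp (I * s * φ) + ((‖q‖ : ℝ) : ℂ) * (v : ℂ) ^ (-(t : ℤ)) *
    exp (I * ((q.arg : ℂ) - t * φ))

theorem hypotrochoid_mul_pow (s t : ℕ) (q : ℂ) {v : ℝ} (hv : v ≠ 0) (φ : ℝ) :
    hypotrochoid s t q v φ * ((v : ℂ) * exp (φ * I)) ^ t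
      = ((v : ℂ) * exp (φ * I)) ^ (s + t) + q := by
  set w := exp (φ * I)
  have hw : w ≠ 0 := exp_ne_zero _
  have hv' : (v : ℂ) ≠ 0 := ofReal_ne_zero.2 hv
  have hs : exp (I * s * φ) = w ^ s := by rw [← exp_nat_mul]; ring_nf
  have ht : exp (I * ((q.arg : ℂ) - t * φ)) = exp (q.arg * I) / w ^ t := by
    rw [← exp_nat_mul, ← exp_sub]; ring_nf
  calc hypotrochoid s t q v φ * ((v : ℂ) * w) ^ t
      = ((v : ℂ) * w) ^ (s + t) + ‖q‖ * exp (q.arg * I) := by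
        rw [hypotrochoid, hs, ht, zpow_neg, zpow_natCast]
        field_simp
        ring
    _ = ((v : ℂ) * w) ^ (s + t) + q := by rw [norm_mul_exp_arg_mul_I]

theorem eval_trinomial_eq_zero_iff {s t : ℕ} {p q Γ a : ℂ} (ha : a ≠ 0)
    (hΓ : Γ * a ^ t = a ^ (s + t) + q) :
    (X ^ (s + t) + C p * X ^ t + C q : ℂ[X]).eval a = 0 ↔ Γ = -p := by
  simp only [eval_add, eval_mul, eval_pow, eval_X, eval_C]
  constructor
  · intro h
    exact mul_right_cancel₀ (pow_ne_zero t ha) (by linear_combination hΓ + h)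
  · intro h
    linear_combination -hΓ + a ^ t * h

theorem eval_trinomial_ofReal_mul_exp_eq_zero_iff (s t : ℕ) (p q : ℂ) {v : ℝ} (hv : v ≠ 0)
    (φ : ℝ) :
    (X ^ (s + t) + C p * X ^ t + C q : ℂ[X]).eval ((v : ℂ) * exp (φ * I)) = 0 ↔
      hypotrochoid s t q v φ = -p :=
  eval_trinomial_eq_zero_iff (mul_ne_zero (ofReal_ne_zero.2 hv) (exp_ne_zero _))
    (hypotrochoid_mul_pow s t q hv φ)

theorem two_distinct_roots_iff_double_point_general (s t : ℕ)
    (p q : ℂ) (v : ℝ) (hv : 0 < v) (γ : ℝ → ℂ)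
    (hγ : γ = fun φ : ℝ => (v : ℂ) ^ s * Complex.exp (Complex.I * s * φ)
      + ((‖q‖ : ℝ) : ℂ) * (v : ℂ) ^ (-(t : ℤ)) *
          Complex.exp (Complex.I * ((q.arg : ℂ) - t * φ))) :
    (∃ a b : ℂ, a ≠ b ∧
      (X ^ (s + t) + C p * X ^ t + C q : Polynomial ℂ).eval a = 0 ∧
      (X ^ (s + t) + C p * X ^ t + C q : Polynomial ℂ).eval b = 0 ∧
      ‖a‖ = v ∧ ‖b‖ = v) ↔
    (∃ φ ∈ Set.Ico (0 : ℝ) (2 * Real.pi), ∃ ψ ∈ Set.Ico (0 : ℝ) (2 * Real.pi),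
      φ ≠ ψ ∧ γ φ = -p ∧ γ ψ = -p) := by
  rw [show γ = hypotrochoid s t q v from hγ]
  simp_rw [← eval_trinomial_ofReal_mul_exp_eq_zero_iff s t p q hv.ne']
  refine Iff.trans ?_ ((bijOn_ofReal_mul_exp_mul_I_Ico hv).exists_pair_ne_iff
    fun z => (X ^ (s + t) + C p * X ^ t + C q : ℂ[X]).eval z = 0)
  simp only [mem_sphere_zero_iff_norm]
  grind

/-- The trinomial `f = z^(s+t) + p z^t + q` has two distinct roots of identical
norm `v` if and only if `-p` is a real double point of the associated
hypotrochoid `γ(φ) = v^s e^(isφ) + |q| v^(-t) e^(i(arg q - tφ))`. -/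
theorem two_distinct_roots_iff_double_point (s t : ℕ) (hs : 0 < s) (ht : 0 < t)
    (p q : ℂ) (hq : q ≠ 0) (v : ℝ) (hv : 0 < v) (γ : ℝ → ℂ)
    (hγ : γ = fun φ : ℝ => (v : ℂ) ^ s * Complex.exp (Complex.I * s * φ)
      + ((‖q‖ : ℝ) : ℂ) * (v : ℂ) ^ (-(t : ℤ)) *
          Complex.exp (Complex.I * ((q.arg : ℂ) - t * φ))) :
    (∃ a b : ℂ, a ≠ b ∧
      (X ^ (s + t) + C p * X ^ t + C q : Polynomial ℂ).eval a = 0 ∧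
      (X ^ (s + t) + C p * X ^ t + C q : Polynomial ℂ).eval b = 0 ∧
      ‖a‖ = v ∧ ‖b‖ = v) ↔
    (∃ φ ∈ Set.Ico (0 : ℝ) (2 * Real.pi), ∃ ψ ∈ Set.Ico (0 : ℝ) (2 * Real.pi),
      φ ≠ ψ ∧ γ φ = -p ∧ γ ψ = -p) :=
  two_distinct_roots_iff_double_point_general s t p q v hv γ hγ
end

section
/- Let s, t be positive integers, p ∈ ℂ, q ∈ ℂ with q ≠ 0, v > 0, and f(z) = z^{s+t} + p z^t + q. Define γ : ℝ → ℂ, γ(φ) = v^s·e^{i·s·φ} + |q|·v^{−t}·e^{i·(arg(q) − t·φ)}. Then f has a root of multiplicity at least 2 of norm v if and only if there exists φ ∈ [0, 2π) with γ(φ) = −p and γ′(φ) = 0, where γ′ is the derivative of γ with respect to φ (i.e., −p is a cusp of the curve γ). -/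
/-!
On the circle `|z| = v`, written `z = v e^{iφ}`, the hypotrochoid is `γ = g ∘ circleMap 0 v` for
the Laurent polynomial `g z = z^s + q z^{-t}`, and the trinomial factors as `f z = z^t (g z + p)`.
For `z ≠ 0` the product rule then shows that `f z = f' z = 0` iff `g z = -p` and `g' z = 0`,
while the chain rule gives `γ' φ = g' z · i z`, which vanishes iff `g' z = 0`.
-/

open Polynomial Complex Set

theorem image_circleMap_Ico (c : ℂ) (R : ℝ) :
    circleMap c R '' Ico 0 (2 * Real.pi) = Metric.sphere c |R| := by
  rw [← range_circleMap]
  refine (image_subset_range _ _).antisymm (range_subset_iff.2 fun θ => ?_)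
  obtain ⟨φ, hφ, hθφ⟩ := (periodic_circleMap c R).exists_mem_Ico Real.two_pi_pos θ 0
  exact ⟨φ, by rwa [zero_add] at hφ, hθφ.symm⟩

theorem deriv_comp_circleMap_eq_zero_iff {g : ℂ → ℂ} {v φ : ℝ} (hv : v ≠ 0)
    (hg : DifferentiableAt ℂ g (circleMap 0 v φ)) :
    deriv (g ∘ circleMap 0 v) φ = 0 ↔ deriv g (circleMap 0 v φ) = 0 := by
  rw [deriv_comp φ hg (differentiable_circleMap 0 v φ), deriv_circleMap]
  simp [circleMap_ne_center hv, I_ne_zero]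

noncomputable def trinomialLaurent (s t : ℕ) (q z : ℂ) : ℂ :=
  z ^ s + q * z ^ (-(t : ℤ))

section
variable {s t : ℕ} {q : ℂ}

theorem differentiableAt_trinomialLaurent {z : ℂ} (hz : z ≠ 0) :
    DifferentiableAt ℂ (trinomialLaurent s t q) z :=
  (differentiableAt_pow s).add ((differentiableAt_zpow.2 (Or.inl hz)).const_mul q)

theorem eval_trinomial_eq_pow_mul (p : ℂ) {z : ℂ} (hz : z ≠ 0) :
    (X ^ (s + t) + C p * X ^ t + C q).eval z = z ^ t * (trinomialLaurent s t q z + p) := by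
  simp only [eval_add, eval_mul, eval_pow, eval_X, eval_C, trinomialLaurent, zpow_neg,
    zpow_natCast]
  field_simp
  ring

theorem eval_derivative_trinomial (p : ℂ) {z : ℂ} (hz : z ≠ 0) :
    (derivative (X ^ (s + t) + C p * X ^ t + C q)).eval z =
      t * z ^ (t - 1) * (trinomialLaurent s t q z + p) +
        z ^ t * deriv (trinomialLaurent s t q) z := by
  have hf : (fun w => (X ^ (s + t) + C p * X ^ t + C q).eval w) =ᶠ[nhds z]
      fun w => w ^ t * (trinomialLaurent s t q w + p) := by
    filter_upwards [isOpen_ne.mem_nhds hz] with w hw using eval_trinomial_eq_pow_mul p hw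
  rw [← Polynomial.deriv, hf.deriv_eq]
  exact ((hasDerivAt_pow t z).mul
    ((differentiableAt_trinomialLaurent hz).hasDerivAt.add_const p)).deriv

theorem eval_trinomial_and_derivative_eq_zero_iff (p : ℂ) {z : ℂ} (hz : z ≠ 0) :
    ((X ^ (s + t) + C p * X ^ t + C q).eval z = 0 ∧
        (derivative (X ^ (s + t) + C p * X ^ t + C q)).eval z = 0) ↔
      trinomialLaurent s t q z = -p ∧ deriv (trinomialLaurent s t q) z = 0 := by
  rw [eval_trinomial_eq_pow_mul p hz, eval_derivative_trinomial p hz, ← add_eq_zero_iff_eq_neg]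
  have hzt : z ^ t ≠ 0 := pow_ne_zero t hz
  rw [mul_eq_zero, or_iff_right hzt]
  refine and_congr_right fun hgp => ?_
  rw [hgp, mul_zero, zero_add, mul_eq_zero, or_iff_right hzt]

end

theorem hypotrochoid_eq_comp_circleMap (s t : ℕ) (q : ℂ) (v : ℝ) :
    (fun φ : ℝ => (v : ℂ) ^ s * exp (I * s * φ)
      + (‖q‖ : ℂ) * (v : ℂ) ^ (-(t : ℤ)) * exp (I * ((q.arg : ℂ) - t * φ))) =
      trinomialLaurent s t q ∘ circleMap 0 v := by
  funext φ
  simp only [Function.comp, trinomialLaurent, circleMap_zero, mul_pow, mul_zpow, ← exp_nat_mul,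
    ← exp_int_mul]
  conv_rhs => rw [← norm_mul_exp_arg_mul_I q]
  rw [show I * (q.arg - t * φ) = q.arg * I + ((-t : ℤ) : ℂ) * (φ * I) by push_cast; ring,
    exp_add, show I * s * φ = s * (φ * I) by ring]
  ring

theorem double_root_iff_cusp_general (s t : ℕ)
    (p q : ℂ) (v : ℝ) (hv : 0 < v) (γ : ℝ → ℂ)
    (hγ : γ = fun φ : ℝ => (v : ℂ) ^ s * Complex.exp (Complex.I * s * φ)
      + (‖q‖ : ℂ) * (v : ℂ) ^ (-(t : ℤ)) *
          Complex.exp (Complex.I * ((q.arg : ℂ) - t * φ))) :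
    (∃ a : ℂ, (X ^ (s + t) + C p * X ^ t + C q : Polynomial ℂ).eval a = 0 ∧
      (derivative (X ^ (s + t) + C p * X ^ t + C q : Polynomial ℂ)).eval a = 0 ∧
      ‖a‖ = v) ↔
    (∃ φ ∈ Set.Ico (0 : ℝ) (2 * Real.pi), γ φ = -p ∧ deriv γ φ = 0) := by
  rw [hγ, hypotrochoid_eq_comp_circleMap]
  have hz (φ : ℝ) : circleMap 0 v φ ≠ 0 := circleMap_ne_center hv.ne'
  calc _ ↔ ∃ a ∈ circleMap 0 v '' Ico 0 (2 * Real.pi),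
        (X ^ (s + t) + C p * X ^ t + C q : ℂ[X]).eval a = 0 ∧
          (derivative (X ^ (s + t) + C p * X ^ t + C q : ℂ[X])).eval a = 0 := by
        simp only [image_circleMap_Ico, abs_of_pos hv, mem_sphere_zero_iff_norm]
        exact exists_congr fun a => and_rotate.symm
    _ ↔ _ := by
      rw [exists_mem_image]
      refine exists_congr fun φ => and_congr_right fun _ => ?_
      rw [eval_trinomial_and_derivative_eq_zero_iff p (hz φ),
        deriv_comp_circleMap_eq_zero_iff hv.ne' (differentiableAt_trinomialLaurent (hz φ))]
      rfl

/-- The trinomial `f = z^(s+t) + p z^t + q` has a root of multiplicity at least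
two of norm `v` if and only if `-p` is a cusp of the associated hypotrochoid
`γ(φ) = v^s e^(isφ) + |q| v^(-t) e^(i(arg q - tφ))`, i.e. there is
`φ ∈ [0, 2π)` with `γ(φ) = -p` and `γ'(φ) = 0`. -/
theorem double_root_iff_cusp (s t : ℕ) (hs : 0 < s) (ht : 0 < t)
    (p q : ℂ) (hq : q ≠ 0) (v : ℝ) (hv : 0 < v) (γ : ℝ → ℂ)
    (hγ : γ = fun φ : ℝ => (v : ℂ) ^ s * Complex.exp (Complex.I * s * φ)
      + (‖q‖ : ℂ) * (v : ℂ) ^ (-(t : ℤ)) *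
          Complex.exp (Complex.I * ((q.arg : ℂ) - t * φ))) :
    (∃ a : ℂ, (X ^ (s + t) + C p * X ^ t + C q : Polynomial ℂ).eval a = 0 ∧
      (derivative (X ^ (s + t) + C p * X ^ t + C q : Polynomial ℂ)).eval a = 0 ∧
      ‖a‖ = v) ↔
    (∃ φ ∈ Set.Ico (0 : ℝ) (2 * Real.pi), γ φ = -p ∧ deriv γ φ = 0) :=
  double_root_iff_cusp_general s t p q v hv γ hγ
end

section
/- Let s, t be coprime positive integers, p ∈ ℂ, q ∈ ℂ with q ≠ 0, and f(z) = z^{s+t} + p z^t + q. Then f has a root of multiplicity at least 2 (i.e., a common zero of f and f′) if and only if q^s·(s+t)^{s+t} = (−1)^{s+t}·p^{s+t}·s^s·t^t. (This expresses the vanishing of the discriminant D(f) = (−1)^{(s+t)(s+t−1)/2}·q^s·(q^s(s+t)^{s+t} − (−1)^{s+t}p^{s+t}s^s t^t) of the trinomial.) -/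
open Polynomial
set_option maxRecDepth 8000

lemma exists_pow_eq_of_coprime {A B : ℂ} (hA : A ≠ 0) (hB : B ≠ 0) {s t : ℕ}
    (hst : Nat.Coprime s t) (h : A ^ t = B ^ s) :
    ∃ a : ℂ, a ≠ 0 ∧ a ^ s = A ∧ a ^ t = B := by
  have hbez : (s : ℤ) * Nat.gcdA s t + (t : ℤ) * Nat.gcdB s t = 1 := by
    have := Nat.gcd_eq_gcd_ab s t
    rw [hst] at this
    push_cast at this
    linarith
  set u := Nat.gcdA s t
  set v := Nat.gcdB s t
  have hz : A ^ (t : ℤ) = B ^ (s : ℤ) := by rw [zpow_natCast, zpow_natCast]; exact h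
  refine ⟨A ^ u * B ^ v, mul_ne_zero (zpow_ne_zero _ hA) (zpow_ne_zero _ hB), ?_, ?_⟩
  · have e1 : B ^ ((v:ℤ) * s) = A ^ ((t:ℤ) * v) := by
      rw [mul_comm (v:ℤ) (s:ℤ), zpow_mul, ← hz, ← zpow_mul, mul_comm]
    calc (A ^ u * B ^ v) ^ s = A ^ (u * (s:ℤ)) * B ^ (v * (s:ℤ)) := by
          rw [mul_pow, ← zpow_natCast (A ^ u), ← zpow_natCast (B ^ v),
            ← zpow_mul, ← zpow_mul]
      _ = A ^ ((s:ℤ) * u + t * v) := by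
          rw [e1, ← zpow_add₀ hA, mul_comm (u:ℤ) (s:ℤ)]
      _ = A := by rw [hbez, zpow_one]
  · have e1 : A ^ ((u:ℤ) * t) = B ^ ((s:ℤ) * u) := by
      rw [mul_comm (u:ℤ) (t:ℤ), zpow_mul, hz, ← zpow_mul, mul_comm]
    calc (A ^ u * B ^ v) ^ t = A ^ (u * (t:ℤ)) * B ^ (v * (t:ℤ)) := by
          rw [mul_pow, ← zpow_natCast (A ^ u), ← zpow_natCast (B ^ v),
            ← zpow_mul, ← zpow_mul]
      _ = B ^ ((s:ℤ) * u + t * v) := by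
          rw [e1, ← zpow_add₀ hB, mul_comm (v:ℤ) (t:ℤ)]
      _ = B := by rw [hbez, zpow_one]

/-- Discriminant criterion for trinomials: `f = z^(s+t) + p z^t + q` with
`gcd(s,t) = 1` and `q ≠ 0` has a root of multiplicity at least two (a common
zero of `f` and `f'`) if and only if
`q^s (s+t)^(s+t) = (-1)^(s+t) p^(s+t) s^s t^t`. -/
theorem double_root_iff_discriminant_vanishes (s t : ℕ) (hs : 0 < s)
    (ht : 0 < t) (hst : Nat.Coprime s t) (p q : ℂ) (hq : q ≠ 0) :
    (∃ a : ℂ, (X ^ (s + t) + C p * X ^ t + C q : Polynomial ℂ).eval a = 0 ∧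
      (derivative (X ^ (s + t) + C p * X ^ t + C q : Polynomial ℂ)).eval a = 0) ↔
    q ^ s * ((s : ℂ) + t) ^ (s + t) =
      (-1 : ℂ) ^ (s + t) * p ^ (s + t) * (s : ℂ) ^ s * (t : ℂ) ^ t := by
  have hsC : (s : ℂ) ≠ 0 := Nat.cast_ne_zero.mpr hs.ne'
  have htC : (t : ℂ) ≠ 0 := Nat.cast_ne_zero.mpr ht.ne'
  have hstC : ((s : ℂ) + t) ≠ 0 := by
    have : ((s + t : ℕ) : ℂ) ≠ 0 := Nat.cast_ne_zero.mpr (by omega)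
    push_cast at this; exact this
  have hpow : s + t - 1 = s + (t - 1) := by omega
  constructor
  · rintro ⟨a, hf, hf'⟩
    simp only [eval_add, eval_mul, eval_pow, eval_X, eval_C] at hf
    simp only [derivative_add, derivative_X_pow, derivative_mul, derivative_C,
      derivative_X, eval_add, eval_mul, eval_pow, eval_X, eval_C, eval_natCast,
      zero_mul, add_zero, mul_one, zero_add] at hf'
    push_cast at hf'
    have ha : a ≠ 0 := by
      rintro rfl
      rw [zero_pow (by omega), zero_pow ht.ne', mul_zero, zero_add, zero_add] at hf
      exact hq hf
    have e1 : a ^ (s + t - 1) * a = a ^ s * a ^ t := by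
      rw [← pow_succ, show s + t - 1 + 1 = s + t from by omega, pow_add]
    have e2 : a ^ (t - 1) * a = a ^ t := by
      rw [← pow_succ, Nat.sub_add_cancel ht]
    have E1 : ((s:ℂ) + t) * a ^ s = -(p * t) := by
      have h2 : (((s:ℂ) + t) * a ^ s + p * t) * a ^ t = 0 := by
        calc (((s:ℂ) + t) * a ^ s + p * t) * a ^ t
            = (((s:ℂ) + t) * a ^ (s + t - 1) + p * (t * a ^ (t - 1))) * a := by
              linear_combination (-((s:ℂ)+t)) * e1 - p * (t:ℂ) * e2
          _ = 0 := by rw [hf', zero_mul]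
      rcases mul_eq_zero.mp h2 with h | h
      · linear_combination h
      · exact absurd h (pow_ne_zero _ ha)
    have hp : p ≠ 0 := by
      rintro rfl
      rw [zero_mul, neg_zero, mul_eq_zero] at E1
      rcases E1 with h | h
      · exact hstC h
      · exact pow_ne_zero _ ha h
    have E2 : p * s * a ^ t = -(q * ((s:ℂ) + t)) := by
      have h3 : ((s:ℂ) + t) * (a ^ s * a ^ t + p * a ^ t + q) = 0 := by
        rw [← pow_add, hf, mul_zero]
      linear_combination h3 - a ^ t * E1
    have H1 : ((s:ℂ) + t) ^ t * a ^ (s * t) = (-1) ^ t * (p ^ t * (t:ℂ) ^ t) := by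
      have E1' : ((s:ℂ) + t) * a ^ s = (-1) * (p * t) := by linear_combination E1
      have h4 := congrArg (· ^ t) E1'
      simp only [mul_pow] at h4
      rw [← pow_mul] at h4
      linear_combination h4
    have H2' : q ^ s * ((s:ℂ) + t) ^ s = (-1) ^ s * (p ^ s * (s:ℂ) ^ s * a ^ (s * t)) := by
      have E2' : p * s * a ^ t = (-1) * (q * ((s:ℂ) + t)) := by linear_combination E2
      have h5 := congrArg (· ^ s) E2'
      simp only [mul_pow] at h5
      rw [← pow_mul, mul_comm t s] at h5
      have hm : ((-1 : ℂ)) ^ s * (-1) ^ s = 1 := by rw [← mul_pow]; norm_num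
      linear_combination (-((-1:ℂ)) ^ s) * h5 - (q ^ s * ((s:ℂ)+t) ^ s) * hm
    refine mul_right_cancel₀ (pow_ne_zero (s * t) ha) ?_
    linear_combination (((s:ℂ) + t) ^ t * a ^ (s * t)) * H2' +
      ((-1:ℂ)) ^ s * p ^ s * (s:ℂ) ^ s * a ^ (s * t) * H1
  · intro D
    have hp : p ≠ 0 := by
      rintro rfl
      rw [zero_pow (by omega), mul_zero, zero_mul, zero_mul] at D
      exact (mul_ne_zero (pow_ne_zero _ hq) (pow_ne_zero _ hstC)) D
    set A : ℂ := -(p * t) / ((s:ℂ) + t) with hAdef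
    set B : ℂ := -(q * ((s:ℂ) + t)) / (p * s) with hBdef
    have hA : A ≠ 0 :=
      div_ne_zero (neg_ne_zero.mpr (mul_ne_zero hp htC)) hstC
    have hB : B ≠ 0 :=
      div_ne_zero (neg_ne_zero.mpr (mul_ne_zero hq hstC)) (mul_ne_zero hp hsC)
    have hm : ((-1 : ℂ)) ^ s * (-1) ^ s = 1 := by rw [← mul_pow]; norm_num
    have hAB : A ^ t = B ^ s := by
      rw [hAdef, hBdef, div_pow, div_pow,
        div_eq_div_iff (pow_ne_zero _ hstC) (pow_ne_zero _ (mul_ne_zero hp hsC))]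
      have n1 : (-(p * (t:ℂ))) ^ t = (-1:ℂ) ^ t * (p ^ t * (t:ℂ) ^ t) := by
        rw [show -(p * (t:ℂ)) = (-1) * (p * t) from by ring, mul_pow, mul_pow]
      have n2 : (-(q * ((s:ℂ) + t))) ^ s = (-1:ℂ) ^ s * (q ^ s * ((s:ℂ) + t) ^ s) := by
        rw [show -(q * ((s:ℂ) + t)) = (-1) * (q * ((s:ℂ)+t)) from by ring, mul_pow, mul_pow]
      rw [n1, n2, mul_pow]
      linear_combination (-((-1:ℂ)) ^ s) * D -
        ((-1:ℂ)) ^ t * p ^ (s + t) * (s:ℂ) ^ s * (t:ℂ) ^ t * hm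
    obtain ⟨a, ha, has, hat⟩ := exists_pow_eq_of_coprime hA hB hst hAB
    refine ⟨a, ?_, ?_⟩
    · simp only [eval_add, eval_mul, eval_pow, eval_X, eval_C]
      rw [pow_add, has, hat, hAdef, hBdef]
      field_simp
      ring
    · simp only [derivative_add, derivative_X_pow, derivative_mul, derivative_C,
        derivative_X, eval_add, eval_mul, eval_pow, eval_X, eval_C, eval_natCast,
        zero_mul, add_zero, mul_one, zero_add]
      push_cast
      rw [hpow, pow_add, has]
      have hfac : ((s:ℂ) + t) * (A * a ^ (t-1)) + p * (t * a ^ (t-1)) =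
          (((s:ℂ)+t) * A + p * t) * a ^ (t-1) := by ring
      rw [hfac]
      have hz : ((s:ℂ)+t) * A + p * t = 0 := by
        rw [hAdef]; field_simp; ring
      rw [hz, zero_mul]
end

section
/- Let s, t be coprime positive integers. The image of the set {(p,q) ∈ ℂ² : p ≠ 0, q ≠ 0, q^s·(s+t)^{s+t} = (−1)^{s+t}·p^{s+t}·s^s·t^t} under the map (p,q) ↦ (log|p|, log|q|) equals the line {(x,y) ∈ ℝ² : x = (s/(s+t))·y + log((t/s)^{s/(s+t)} + (s/t)^{t/(s+t)})}. (That is, the amoeba of the discriminant of trinomials with exponents s, t is this line.) -/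
/-!
Taking absolute values in the discriminant equation gives
`|q|^s (s+t)^(s+t) = |p|^(s+t) s^s t^t`, whose logarithm is the line
`(s+t) log|p| = s log|q| + (s+t) log(s+t) - s log s - t log t`. Its constant matches
`log((t/s)^(s/(s+t)) + (s/t)^(t/(s+t)))` because the two powers are `t` and `s` times the common
factor `exp (-(s log s + t log t)/(s+t))`. Conversely every `|p|` occurs, since the equation can
be solved for `q` over `ℂ`, and then the line forces `log|q|`.
-/

open Real

lemma div_rpow_eq_mul_exp {U V : ℝ} (hU : 0 < U) (hV : 0 < V) :
    (V / U) ^ (U / (U + V)) = V * exp (-(U * log U + V * log V) / (U + V)) := by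
  have hUV : U + V ≠ 0 := by positivity
  rw [rpow_def_of_pos (div_pos hV hU), log_div hV.ne' hU.ne', ← exp_log hV, ← exp_add,
    log_exp]
  congr 1
  field_simp
  ring

lemma log_div_rpow_add_div_rpow {S T : ℝ} (hS : 0 < S) (hT : 0 < T) :
    log ((T / S) ^ (S / (S + T)) + (S / T) ^ (T / (S + T))) =
      log (S + T) - (S * log S + T * log T) / (S + T) := by
  rw [div_rpow_eq_mul_exp hS hT, add_comm S T, div_rpow_eq_mul_exp hT hS, add_comm T S,
    add_comm (T * log T), ← add_mul, add_comm T S, log_mul (by positivity) (exp_pos _).ne',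
    log_exp, neg_div, sub_eq_add_neg]

lemma log_eq_line_of_pow_eq {s t : ℕ} (hs : 0 < s) (ht : 0 < t) {a b : ℝ} (ha : 0 < a)
    (hb : 0 < b)
    (h : b ^ s * ((s : ℝ) + t) ^ (s + t) = a ^ (s + t) * (s : ℝ) ^ s * (t : ℝ) ^ t) :
    log a = (s : ℝ) / (s + t) * log b +
      log (((t : ℝ) / s) ^ ((s : ℝ) / (s + t)) + ((s : ℝ) / t) ^ ((t : ℝ) / (s + t))) := by
  have hS : (0 : ℝ) < s := by exact_mod_cast hs
  have hT : (0 : ℝ) < t := by exact_mod_cast ht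
  have hlog := congrArg log h
  rw [log_mul (by positivity) (by positivity), log_mul (by positivity) (by positivity),
    log_mul (by positivity) (by positivity)] at hlog
  simp only [log_pow] at hlog
  push_cast at hlog
  rw [log_div_rpow_add_div_rpow hS hT]
  field_simp
  linarith

lemma norm_pow_eq_of_discriminant_eq_zero {𝕜 : Type*} [RCLike 𝕜] {s t : ℕ} {p q : 𝕜}
    (h : q ^ s * ((s : 𝕜) + t) ^ (s + t) =
      (-1 : 𝕜) ^ (s + t) * p ^ (s + t) * (s : 𝕜) ^ s * (t : 𝕜) ^ t) :
    ‖q‖ ^ s * ((s : ℝ) + t) ^ (s + t) =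
      ‖p‖ ^ (s + t) * (s : ℝ) ^ s * (t : ℝ) ^ t := by
  have hnorm := congrArg (‖·‖) h
  simp only [norm_mul, norm_pow, norm_neg, norm_one, one_pow, one_mul, RCLike.norm_natCast]
    at hnorm
  rwa [← Nat.cast_add, RCLike.norm_natCast, Nat.cast_add] at hnorm

lemma exists_discriminant_eq_zero {s t : ℕ} (hs : 0 < s) (ht : 0 < t) {p : ℂ} (hp : p ≠ 0) :
    ∃ q : ℂ, q ≠ 0 ∧ q ^ s * ((s : ℂ) + t) ^ (s + t) =
      (-1 : ℂ) ^ (s + t) * p ^ (s + t) * (s : ℂ) ^ s * (t : ℂ) ^ t := by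
  have hN : ((s : ℂ) + t) ^ (s + t) ≠ 0 := by
    rw [← Nat.cast_add]; exact pow_ne_zero _ (by exact_mod_cast (by omega : s + t ≠ 0))
  set c := (-1 : ℂ) ^ (s + t) * p ^ (s + t) * (s : ℂ) ^ s * (t : ℂ) ^ t
  have hc : c ≠ 0 := by simp [c, hp, hs.ne', ht.ne']
  obtain ⟨q, hq⟩ := IsAlgClosed.exists_pow_nat_eq (c / ((s : ℂ) + t) ^ (s + t)) hs
  refine ⟨q, ?_, by rw [hq, div_mul_cancel₀ _ hN]⟩
  rintro rfl
  rw [zero_pow hs.ne', eq_comm, div_eq_zero_iff] at hq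
  exact hq.elim hc hN

theorem discriminant_amoeba_is_line_general (s t : ℕ) (hs : 0 < s) (ht : 0 < t) :
    (fun x : ℂ × ℂ =>
        (Real.log ‖x.1‖, Real.log ‖x.2‖)) ''
      {x : ℂ × ℂ | x.1 ≠ 0 ∧ x.2 ≠ 0 ∧
        x.2 ^ s * ((s : ℂ) + t) ^ (s + t) =
          (-1 : ℂ) ^ (s + t) * x.1 ^ (s + t) * (s : ℂ) ^ s * (t : ℂ) ^ t} =
    {y : ℝ × ℝ | y.1 = ((s : ℝ) / (s + t)) * y.2 +
      Real.log (((t : ℝ) / s) ^ ((s : ℝ) / (s + t)) +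
        ((s : ℝ) / t) ^ ((t : ℝ) / (s + t)))} := by
  have line_of_mem {p q : ℂ} (hp : p ≠ 0) (hq : q ≠ 0)
      (h : q ^ s * ((s : ℂ) + t) ^ (s + t) =
        (-1 : ℂ) ^ (s + t) * p ^ (s + t) * (s : ℂ) ^ s * (t : ℂ) ^ t) :=
    log_eq_line_of_pow_eq hs ht (norm_pos_iff.2 hp) (norm_pos_iff.2 hq)
      (norm_pow_eq_of_discriminant_eq_zero h)
  ext ⟨X, Y⟩
  constructor
  · rintro ⟨⟨p, q⟩, ⟨hp, hq, h⟩, hXY⟩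
    cases hXY
    exact line_of_mem hp hq h
  · intro hline
    have hp : ((exp X : ℝ) : ℂ) ≠ 0 := Complex.ofReal_ne_zero.2 (exp_pos X).ne'
    obtain ⟨q, hq, h⟩ := exists_discriminant_eq_zero hs ht hp
    have hX : log ‖((exp X : ℝ) : ℂ)‖ = X := by
      rw [Complex.norm_real, norm_of_nonneg (exp_pos X).le, log_exp]
    have hY : log ‖q‖ = Y := by
      have hpos : (0 : ℝ) < s / (s + t) := by positivity
      have := (line_of_mem hp hq h).symm.trans (hX.trans hline)
      exact mul_left_cancel₀ hpos.ne' (add_right_cancel this)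
    exact ⟨(_, q), ⟨hp, hq, h⟩, Prod.ext hX hY⟩

/-- The amoeba of the discriminant of trinomials with coprime exponents `s, t`
is a line: the image of
`{(p,q) : p ≠ 0, q ≠ 0, q^s (s+t)^(s+t) = (-1)^(s+t) p^(s+t) s^s t^t}` under
`(p,q) ↦ (log|p|, log|q|)` equals
`{(x,y) : x = (s/(s+t)) y + log((t/s)^(s/(s+t)) + (s/t)^(t/(s+t)))}`. -/
theorem discriminant_amoeba_is_line (s t : ℕ) (hs : 0 < s) (ht : 0 < t)
    (hst : Nat.Coprime s t) :
    (fun x : ℂ × ℂ =>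
        (Real.log ‖x.1‖, Real.log ‖x.2‖)) ''
      {x : ℂ × ℂ | x.1 ≠ 0 ∧ x.2 ≠ 0 ∧
        x.2 ^ s * ((s : ℂ) + t) ^ (s + t) =
          (-1 : ℂ) ^ (s + t) * x.1 ^ (s + t) * (s : ℂ) ^ s * (t : ℂ) ^ t} =
    {y : ℝ × ℝ | y.1 = ((s : ℝ) / (s + t)) * y.2 +
      Real.log (((t : ℝ) / s) ^ ((s : ℝ) / (s + t)) +
        ((s : ℝ) / t) ^ ((t : ℝ) / (s + t)))} :=
  discriminant_amoeba_is_line_general s t hs ht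
end
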